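/- The one-period dynamic-programming operator preserves monotonicity, convexity and the Lipschitz bound: let r ∈ ℝ, σ > 0, a ≥ 0, and let g : [0,∞) → ℝ be Borel measurable with |g(x)| ≤ C·(1 + x) for some constant C. Define (Tg)(w) = e^{−r} ∫_ℝ g( (w + a)·e^{r − σ²/2 + σ z} ) γ(dz) for w ∈ [0,∞). Then: (i) if g is nondecreasing then Tg is nondecreasing; (ii) if g is convex then Tg is convex; (iii) if |g(x) − g(y)| ≤ |x − y| for all x, y ≥ 0, then |(Tg)(x) − (Tg)(y)| ≤ |x − y| for all x, y ≥ 0. -/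

import Mathlib

/-!
Write `E z = exp (r - σ²/2 + σ z)`, a positive integrable multiplier with `∫ E dγ = e^r`.
For each fixed `z` the map `c ↦ g (c · E z)` inherits monotonicity and convexity from `g` on
`[0, ∞)`, and is `E z`-Lipschitz when `g` is 1-Lipschitz; the linear growth of `g` makes all
these functions integrable, so the properties pass to `c ↦ ∫ g (c · E z) dγ` by monotonicity and
linearity of the integral. Shifting by `a ≥ 0` and scaling by `e^{-r}` keeps them, and the
Lipschitz constant becomes `e^{-r} ∫ E dγ = 1`.
-/

open MeasureTheory ProbabilityTheory Real

section ScaleMixture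

variable {Ω : Type*} [MeasurableSpace Ω] {μ : Measure Ω} {E : Ω → ℝ} {g : ℝ → ℝ}

lemma integrable_comp_mul_of_linear_growth [IsFiniteMeasure μ] (hg : Measurable g) {C : ℝ}
    (hgrowth : ∀ x, 0 ≤ x → |g x| ≤ C * (1 + x)) (hE : Integrable E μ) (hE0 : ∀ z, 0 ≤ E z)
    {c : ℝ} (hc : 0 ≤ c) : Integrable (fun z ↦ g (c * E z)) μ := by
  refine (((integrable_const 1).add (hE.const_mul c)).const_mul C).mono'
    (hg.comp_aemeasurable (hE.aemeasurable.const_mul c)).aestronglyMeasurable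
    (ae_of_all _ fun z ↦ ?_)
  simpa using hgrowth (c * E z) (mul_nonneg hc (hE0 z))

variable (hint : ∀ c, 0 ≤ c → Integrable (fun z ↦ g (c * E z)) μ) (hE0 : ∀ z, 0 ≤ E z)
include hint hE0

lemma monotoneOn_integral_comp_mul (hg : MonotoneOn g (Set.Ici 0)) :
    MonotoneOn (fun c ↦ ∫ z, g (c * E z) ∂μ) (Set.Ici 0) := fun x hx y hy hxy ↦
  integral_mono (hint x hx) (hint y hy) fun z ↦
    hg (mul_nonneg hx (hE0 z)) (mul_nonneg hy (hE0 z)) (mul_le_mul_of_nonneg_right hxy (hE0 z))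

lemma convexOn_integral_comp_mul (hg : ConvexOn ℝ (Set.Ici 0) g) :
    ConvexOn ℝ (Set.Ici 0) (fun c ↦ ∫ z, g (c * E z) ∂μ) := by
  refine ⟨convex_Ici 0, fun x hx y hy p q hp hq hpq ↦ ?_⟩
  have hpx := (hint x hx).const_mul p
  have hqy := (hint y hy).const_mul q
  have pointwise : ∀ z, g ((p • x + q • y) * E z) ≤ p * g (x * E z) + q * g (y * E z) :=
    fun z ↦ by
      simpa [add_mul, mul_assoc] using
        hg.2 (mul_nonneg hx (hE0 z)) (mul_nonneg hy (hE0 z)) hp hq hpq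
  calc ∫ z, g ((p • x + q • y) * E z) ∂μ
      ≤ ∫ z, (p * g (x * E z) + q * g (y * E z)) ∂μ :=
        integral_mono (hint _ (convex_Ici 0 hx hy hp hq hpq)) (hpx.add hqy) pointwise
    _ = p • ∫ z, g (x * E z) ∂μ + q • ∫ z, g (y * E z) ∂μ := by
        rw [integral_add hpx hqy, integral_const_mul, integral_const_mul, smul_eq_mul,
          smul_eq_mul]

lemma abs_integral_comp_mul_sub_le (hE : Integrable E μ)
    (hg : ∀ x y, 0 ≤ x → 0 ≤ y → |g x - g y| ≤ |x - y|) {x y : ℝ} (hx : 0 ≤ x) (hy : 0 ≤ y) :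
    |∫ z, g (x * E z) ∂μ - ∫ z, g (y * E z) ∂μ| ≤ |x - y| * ∫ z, E z ∂μ := by
  rw [← integral_sub (hint x hx) (hint y hy), ← integral_const_mul |x - y| E,
    ← Real.norm_eq_abs]
  refine norm_integral_le_of_norm_le (hE.const_mul _) (ae_of_all _ fun z ↦ ?_)
  calc ‖g (x * E z) - g (y * E z)‖ ≤ |x * E z - y * E z| :=
        hg _ _ (mul_nonneg hx (hE0 z)) (mul_nonneg hy (hE0 z))
    _ = |x - y| * E z := by rw [← sub_mul, abs_mul, abs_of_nonneg (hE0 z)]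

end ScaleMixture

lemma integrable_exp_add_mul_gaussianReal (b t m : ℝ) (v : NNReal) :
    Integrable (fun z ↦ exp (b + t * z)) (gaussianReal m v) := by
  simpa [exp_add] using (integrable_exp_mul_gaussianReal (μ := m) (v := v) t).const_mul (exp b)

lemma integral_exp_sub_half_sq_add_mul_gaussianReal (r σ : ℝ) :
    ∫ z, exp (r - σ ^ 2 / 2 + σ * z) ∂(gaussianReal 0 1) = exp r := by
  have hmgf : ∫ z, exp (σ * z) ∂(gaussianReal 0 1) = exp (σ ^ 2 / 2) := by
    simpa [mgf] using congrFun (mgf_fun_id_gaussianReal (μ := 0) (v := 1)) σ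
  simp_rw [exp_add, integral_const_mul, hmgf, ← exp_add]
  ring_nf

theorem dp_operator_preserves_properties_general (r σ a : ℝ) (ha : 0 ≤ a)
    (g : ℝ → ℝ) (hg_meas : Measurable g) (C : ℝ)
    (hgrowth : ∀ x : ℝ, 0 ≤ x → |g x| ≤ C * (1 + x)) :
    ((∀ x y : ℝ, 0 ≤ x → x ≤ y → g x ≤ g y) →
      ∀ x y : ℝ, 0 ≤ x → x ≤ y →
        Real.exp (-r) *
            ∫ z, g ((x + a) * Real.exp (r - σ ^ 2 / 2 + σ * z)) ∂(gaussianReal 0 1) ≤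
          Real.exp (-r) *
            ∫ z, g ((y + a) * Real.exp (r - σ ^ 2 / 2 + σ * z)) ∂(gaussianReal 0 1)) ∧
    (ConvexOn ℝ (Set.Ici (0 : ℝ)) g →
      ConvexOn ℝ (Set.Ici (0 : ℝ)) (fun w =>
        Real.exp (-r) *
          ∫ z, g ((w + a) * Real.exp (r - σ ^ 2 / 2 + σ * z)) ∂(gaussianReal 0 1))) ∧
    ((∀ x y : ℝ, 0 ≤ x → 0 ≤ y → |g x - g y| ≤ |x - y|) →
      ∀ x y : ℝ, 0 ≤ x → 0 ≤ y →
        |Real.exp (-r) *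
            ∫ z, g ((x + a) * Real.exp (r - σ ^ 2 / 2 + σ * z)) ∂(gaussianReal 0 1)
          - Real.exp (-r) *
            ∫ z, g ((y + a) * Real.exp (r - σ ^ 2 / 2 + σ * z)) ∂(gaussianReal 0 1)|
          ≤ |x - y|) := by
  have hE := integrable_exp_add_mul_gaussianReal (r - σ ^ 2 / 2) σ 0 1
  have hE0 : ∀ z : ℝ, 0 ≤ exp (r - σ ^ 2 / 2 + σ * z) := fun z ↦ (exp_pos _).le
  have hint := fun c (hc : 0 ≤ c) ↦
    integrable_comp_mul_of_linear_growth hg_meas hgrowth hE hE0 hc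
  refine ⟨fun hmono x y hx hxy ↦ ?_, fun hconv ↦ ?_, fun hlip x y hx hy ↦ ?_⟩
  · refine mul_le_mul_of_nonneg_left ?_ (exp_pos _).le
    exact monotoneOn_integral_comp_mul hint hE0 (fun x hx y _ hxy ↦ hmono x y hx hxy)
      (Set.mem_Ici.2 (by linarith)) (Set.mem_Ici.2 (by linarith)) (by linarith)
  · have hshift : Set.Ici 0 ⊆ (fun w ↦ a + w) ⁻¹' Set.Ici 0 := fun w (hw : 0 ≤ w) ↦
      show 0 ≤ a + w from add_nonneg ha hw
    have := (((convexOn_integral_comp_mul hint hE0 hconv).translate_left a).subset hshift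
      (convex_Ici 0)).smul (exp_pos (-r)).le
    simpa only [Function.comp_def, smul_eq_mul] using this
  · rw [← mul_sub, abs_mul, abs_exp]
    calc exp (-r) * |∫ z, g ((x + a) * exp (r - σ ^ 2 / 2 + σ * z)) ∂(gaussianReal 0 1)
          - ∫ z, g ((y + a) * exp (r - σ ^ 2 / 2 + σ * z)) ∂(gaussianReal 0 1)|
        ≤ exp (-r) * (|x + a - (y + a)| * exp r) := by
          gcongr
          rw [← integral_exp_sub_half_sq_add_mul_gaussianReal r σ]
          exact abs_integral_comp_mul_sub_le hint hE0 hE hlip (by linarith) (by linarith)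
      _ = |x - y| := by
          rw [add_sub_add_right_eq_sub, mul_left_comm, ← exp_add, neg_add_cancel, exp_zero,
            mul_one]

/-- The one-period dynamic-programming operator
`(Tg)(w) = e^{−r} ∫ g((w + a)·e^{r−σ²/2+σz}) γ(dz)` (with `γ` the standard
Gaussian measure) preserves monotonicity, convexity and the 1-Lipschitz bound:
for Borel measurable `g` with linear growth `|g(x)| ≤ C·(1 + x)` on `[0,∞)`,
(i) if `g` is nondecreasing on `[0,∞)` then so is `Tg`;
(ii) if `g` is convex on `[0,∞)` then so is `Tg`;
(iii) if `g` is 1-Lipschitz on `[0,∞)` then so is `Tg`. -/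
theorem dp_operator_preserves_properties (r σ a : ℝ) (hσ : 0 < σ) (ha : 0 ≤ a)
    (g : ℝ → ℝ) (hg_meas : Measurable g) (C : ℝ)
    (hgrowth : ∀ x : ℝ, 0 ≤ x → |g x| ≤ C * (1 + x)) :
    ((∀ x y : ℝ, 0 ≤ x → x ≤ y → g x ≤ g y) →
      ∀ x y : ℝ, 0 ≤ x → x ≤ y →
        Real.exp (-r) *
            ∫ z, g ((x + a) * Real.exp (r - σ ^ 2 / 2 + σ * z)) ∂(gaussianReal 0 1) ≤
          Real.exp (-r) *
            ∫ z, g ((y + a) * Real.exp (r - σ ^ 2 / 2 + σ * z)) ∂(gaussianReal 0 1)) ∧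
    (ConvexOn ℝ (Set.Ici (0 : ℝ)) g →
      ConvexOn ℝ (Set.Ici (0 : ℝ)) (fun w =>
        Real.exp (-r) *
          ∫ z, g ((w + a) * Real.exp (r - σ ^ 2 / 2 + σ * z)) ∂(gaussianReal 0 1))) ∧
    ((∀ x y : ℝ, 0 ≤ x → 0 ≤ y → |g x - g y| ≤ |x - y|) →
      ∀ x y : ℝ, 0 ≤ x → 0 ≤ y →
        |Real.exp (-r) *
            ∫ z, g ((x + a) * Real.exp (r - σ ^ 2 / 2 + σ * z)) ∂(gaussianReal 0 1)
          - Real.exp (-r) *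
            ∫ z, g ((y + a) * Real.exp (r - σ ^ 2 / 2 + σ * z)) ∂(gaussianReal 0 1)|
          ≤ |x - y|) :=
  dp_operator_preserves_properties_general r σ a ha g hg_meas C hgrowth
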